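/- For a graph manifold M over T_pM with second-order Taylor coefficients κ^j_{αβ} at the origin, the boundary of the intersection of M with the sphere of radius ε centered at p has radial parametric equation r(x̄) = ε − (K(x̄)²/8) ε³ + O(ε⁴), where K(x̄)² = Σ_{i=1}^k ( Σ_{α,β} κ^i_{αβ} x̄^α x̄^β )² = ‖II(x̄,x̄)‖² for unit tangent vectors x̄ ∈ S^{n-1} ⊂ T_pM. -/

import Mathlib

/-!
Along the ray `t ↦ t • x̄`, Taylor's theorem gives `f (t • x̄) = (t² / 2) • II(x̄, x̄) + O(t³)`, hence
`h t := ‖f (t • x̄)‖² = (K² / 4) t⁴ + O(t⁵)`. By the intermediate value theorem the equation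
`r² + h r = ε²` has a root `r ∈ [0, ε]`. Since `ε + r ≥ ε`, the identity `(ε - r)(ε + r) = h r = O(ε⁴)`
gives `ε - r = O(ε³)`, and feeding this into
`(r - ε + K² ε³ / 8)(ε + r) = (K² r⁴ / 4 - h r) + (K² / 8)(ε - r)(2r³ + 2εr² + 2ε²r + ε³)`
shows that the left side is `O(ε⁵)`, i.e. `r = ε - K² ε³ / 8 + O(ε⁴)`.
-/

open Filter Asymptotics Topology Set

theorem taylor_isBigO_univ {E : Type*} [NormedAddCommGroup E] [NormedSpace ℝ E]
    {f : ℝ → E} {n : ℕ} (hf : ContDiff ℝ (n + 1) f) (x₀ : ℝ) :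
    (fun x ↦ f x - taylorWithinEval f n univ x₀ x) =O[𝓝 x₀] fun x ↦ (x - x₀) ^ (n + 1) := by
  have hnext : (fun x ↦ f x - taylorWithinEval f (n + 1) univ x₀ x) =O[𝓝 x₀]
      fun x ↦ (x - x₀) ^ (n + 1) :=
    (taylor_isLittleO_univ (by exact_mod_cast hf)).isBigO
  have hterm : (fun x ↦ (((n + 1 : ℝ) * n.factorial)⁻¹ * (x - x₀) ^ (n + 1)) •
      iteratedDerivWithin (n + 1) f univ x₀) =O[𝓝 x₀] fun x ↦ (x - x₀) ^ (n + 1) := by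
    simpa using ((isBigO_refl (fun x ↦ (x - x₀) ^ (n + 1)) (𝓝 x₀)).const_mul_left
      ((n + 1 : ℝ) * n.factorial)⁻¹).smul
      (isBigO_const_const (iteratedDerivWithin (n + 1) f univ x₀) (one_ne_zero (α := ℝ)) (𝓝 x₀))
  exact (hnext.add hterm).congr_left fun x ↦ by rw [taylorWithinEval_succ]; abel

theorem iteratedDeriv_comp_smul_const {E F : Type*} [NormedAddCommGroup E] [NormedSpace ℝ E]
    [NormedAddCommGroup F] [NormedSpace ℝ F] {f : E → F} {n : WithTop ℕ∞} (hf : ContDiff ℝ n f)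
    {i : ℕ} (hi : i ≤ n) (v : E) (t : ℝ) :
    iteratedDeriv i (fun s : ℝ ↦ f (s • v)) t = iteratedFDeriv ℝ i f (t • v) fun _ ↦ v := by
  have hcomp : (fun s : ℝ ↦ f (s • v)) = f ∘ ContinuousLinearMap.toSpanSingleton ℝ v := rfl
  rw [iteratedDeriv_eq_iteratedFDeriv, hcomp,
    (ContinuousLinearMap.toSpanSingleton ℝ v).iteratedFDeriv_comp_right hf t hi]
  simp

theorem isBigO_comp_smul_sub_taylor_two {E F : Type*} [NormedAddCommGroup E] [NormedSpace ℝ E]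
    [NormedAddCommGroup F] [NormedSpace ℝ F] {f : E → F} (hf : ContDiff ℝ 3 f) (v : E) :
    (fun t : ℝ ↦ f (t • v) - (f 0 + t • fderiv ℝ f 0 v +
      (t ^ 2 / 2) • iteratedFDeriv ℝ 2 f 0 fun _ ↦ v)) =O[𝓝 0] fun t ↦ t ^ 3 := by
  have hg : ContDiff ℝ (2 + 1) fun t : ℝ ↦ f (t • v) := hf.comp (contDiff_id.smul contDiff_const)
  refine (taylor_isBigO_univ hg 0).congr (fun t ↦ ?_) fun t ↦ by simp
  simp [iteratedDerivWithin_univ, iteratedFDeriv_one_apply, div_eq_inv_mul, one_add_one_eq_two,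
    iteratedDeriv_comp_smul_const hf (i := 1) (by norm_num),
    iteratedDeriv_comp_smul_const hf (i := 2) (by norm_num)]

theorem EuclideanSpace.iteratedFDeriv_apply_coord {E ι : Type*} [NormedAddCommGroup E]
    [NormedSpace ℝ E] [Fintype ι] {f : E → EuclideanSpace ℝ ι} {y : E} {n : WithTop ℕ∞}
    (hf : ContDiffAt ℝ n f y) {i : ℕ} (hi : i ≤ n) (m : Fin i → E) (j : ι) :
    iteratedFDeriv ℝ i (fun z ↦ f z j) y m = iteratedFDeriv ℝ i f y m j :=
  congr($((EuclideanSpace.proj j).iteratedFDeriv_comp_left hf hi) m)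

theorem ContinuousMultilinearMap.apply_const_eq_sum_sum_single {ι F : Type*} [Fintype ι] [DecidableEq ι]
    [NormedAddCommGroup F] [NormedSpace ℝ F]
    (M : ContinuousMultilinearMap ℝ (fun _ : Fin 2 ↦ EuclideanSpace ℝ ι) F)
    (x : EuclideanSpace ℝ ι) :
    M (fun _ ↦ x) = ∑ α, ∑ β, (x α * x β) •
      M ![EuclideanSpace.single α 1, EuclideanSpace.single β 1] := by
  have hx : x = ∑ α, x α • EuclideanSpace.single α 1 := by
    simpa using ((EuclideanSpace.basisFun ι ℝ).sum_repr x).symm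
  calc M (fun _ ↦ x) = M (fun _ ↦ ∑ α, x α • EuclideanSpace.single α 1) := by rw [← hx]
    _ = ∑ r : Fin 2 → ι, (∏ i, x (r i)) • M fun i ↦ EuclideanSpace.single (r i) 1 := by
      simp only [M.map_sum, M.map_smul_univ]
    _ = _ := by
      rw [← (finTwoArrowEquiv ι).symm.sum_comp, Fintype.sum_prod_type]
      simp only [Fin.prod_univ_two, finTwoArrowEquiv_symm_apply, Matrix.cons_val_zero,
        Matrix.cons_val_one]
      congr! with α - β - i
      fin_cases i <;> rfl

theorem isBigO_norm_sq_sub_of_isBigO_sub_sq_smul {F : Type*} [NormedAddCommGroup F]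
    [NormedSpace ℝ F] {g : ℝ → F} {w : F}
    (hg : (fun t ↦ g t - (t ^ 2 / 2) • w) =O[𝓝 0] fun t ↦ t ^ 3) :
    (fun t ↦ ‖g t‖ ^ 2 - ‖w‖ ^ 2 / 4 * t ^ 4) =O[𝓝 0] fun t ↦ t ^ 5 := by
  set b : ℝ → F := fun t ↦ (t ^ 2 / 2) • w
  have hb_norm (t : ℝ) : ‖b t‖ = ‖w‖ / 2 * t ^ 2 := by
    simp only [b, norm_smul, Real.norm_eq_abs, abs_div, abs_pow, sq_abs, abs_two]
    ring
  have hb : b =O[𝓝 0] fun t ↦ t ^ 2 :=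
    isBigO_of_le' (c := ‖w‖ / 2) _ fun t ↦ by simp [hb_norm]
  have hdiff : (fun t ↦ ‖g t‖ - ‖b t‖) =O[𝓝 0] fun t ↦ t ^ 3 :=
    (isBigO_of_le _ fun t ↦ by simpa using abs_norm_sub_norm_le (g t) (b t)).trans hg
  have hcube : (fun t : ℝ ↦ t ^ 3) =O[𝓝 0] fun t ↦ t ^ 2 := (isLittleO_pow_pow (by norm_num)).isBigO
  have hsum : (fun t ↦ ‖g t‖ + ‖b t‖) =O[𝓝 0] fun t ↦ t ^ 2 :=
    ((hg.trans hcube).add hb).congr_left (fun t ↦ sub_add_cancel _ _) |>.norm_left.add hb.norm_left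
  refine (hdiff.mul hsum).congr (fun t ↦ ?_) fun t ↦ by ring
  rw [hb_norm]
  ring

theorem exists_mem_Icc_sq_add_eq_sq {h : ℝ → ℝ} (hc : Continuous h) (h0 : h 0 = 0)
    (hnn : ∀ t, 0 ≤ h t) {ε : ℝ} (hε : 0 ≤ ε) : ∃ t ∈ Icc 0 ε, t ^ 2 + h t = ε ^ 2 :=
  intermediate_value_Icc hε (by fun_prop : Continuous fun t ↦ t ^ 2 + h t).continuousOn
    ⟨by simp [h0, sq_nonneg], by simpa using hnn ε⟩

theorem isBigO_pow_of_mul_isBigO_pow_succ {X Y : ℝ → ℝ} {n : ℕ}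
    (hY : ∀ᶠ ε in 𝓝[>] 0, ε ≤ Y ε)
    (hXY : (fun ε ↦ X ε * Y ε) =O[𝓝[>] 0] fun ε ↦ ε ^ (n + 1)) :
    X =O[𝓝[>] 0] fun ε ↦ ε ^ n := by
  obtain ⟨C, hC⟩ := hXY.bound
  refine .of_bound C ?_
  filter_upwards [hC, hY, self_mem_nhdsWithin] with ε hCε hYε (hε : 0 < ε)
  have hYpos : 0 < Y ε := hε.trans_le hYε
  refine le_of_mul_le_mul_right ?_ hε
  calc ‖X ε‖ * ε ≤ ‖X ε * Y ε‖ := by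
        rw [norm_mul, Real.norm_of_nonneg hYpos.le]; gcongr
    _ ≤ C * ‖ε ^ (n + 1)‖ := hCε
    _ = C * ‖ε ^ n‖ * ε := by simp [pow_succ, abs_of_pos hε]; ring

theorem isBigO_sub_radial_expansion {h r : ℝ → ℝ} {c : ℝ}
    (hh : (fun t ↦ h t - c / 4 * t ^ 4) =O[𝓝 0] fun t ↦ t ^ 5)
    (hr : ∀ᶠ ε in 𝓝[>] 0, r ε ∈ Icc 0 ε ∧ r ε ^ 2 + h (r ε) = ε ^ 2) :
    (fun ε ↦ r ε - (ε - c / 8 * ε ^ 3)) =O[𝓝[>] 0] fun ε ↦ ε ^ 4 := by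
  have hpow_le {m k : ℕ} (hmk : m < k) : (fun ε : ℝ ↦ ε ^ k) =O[𝓝[>] 0] fun ε ↦ ε ^ m :=
    (isLittleO_pow_pow hmk).isBigO.mono nhdsWithin_le_nhds
  have hr_le : r =O[𝓝[>] 0] id := .of_bound' <| hr.mono fun ε ⟨⟨h0, hle⟩, _⟩ ↦ by
    simpa [abs_of_nonneg h0, abs_of_nonneg (h0.trans hle)] using hle
  have hr_tendsto : Tendsto r (𝓝[>] 0) (𝓝 0) :=
    hr_le.trans_tendsto (tendsto_id.mono_left nhdsWithin_le_nhds)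
  have hrem : (fun ε ↦ h (r ε) - c / 4 * r ε ^ 4) =O[𝓝[>] 0] fun ε ↦ ε ^ 5 :=
    (hh.comp_tendsto hr_tendsto).trans (hr_le.pow 5)
  have hY : ∀ᶠ ε in 𝓝[>] 0, ε ≤ ε + r ε := hr.mono fun ε ⟨⟨h0, _⟩, _⟩ ↦ by linarith
  have hgap : (fun ε ↦ ε - r ε) =O[𝓝[>] 0] fun ε ↦ ε ^ 3 := by
    refine isBigO_pow_of_mul_isBigO_pow_succ hY ?_
    refine ((hrem.trans (hpow_le (by norm_num))).add ((hr_le.pow 4).const_mul_left (c / 4))).congr'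
      ?_ .rfl
    filter_upwards [hr] with ε ⟨_, heq⟩
    linear_combination heq
  have hcubic : (fun ε ↦ 2 * r ε ^ 3 + 2 * ε * r ε ^ 2 + 2 * ε ^ 2 * r ε + ε ^ 3)
      =O[𝓝[>] 0] fun ε ↦ ε ^ 3 := by
    refine .of_bound 7 ?_
    filter_upwards [hr] with ε ⟨⟨h0, hle⟩, _⟩
    have hε : 0 ≤ ε := h0.trans hle
    rw [Real.norm_of_nonneg (by positivity), Real.norm_of_nonneg (by positivity)]
    have hr2 := pow_le_pow_left₀ h0 hle 2
    nlinarith [mul_le_mul_of_nonneg_left hle (sq_nonneg ε), mul_le_mul_of_nonneg_left hr2 hε]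
  refine isBigO_pow_of_mul_isBigO_pow_succ hY ?_
  refine (hrem.neg_left.add (((hgap.mul hcubic).const_mul_left (c / 8)).trans ?_)).congr' ?_ .rfl
  · exact (hpow_le (k := 6) (by norm_num)).congr_left fun ε ↦ by ring
  filter_upwards [hr] with ε ⟨_, heq⟩
  linear_combination (-1 : ℝ) * heq

theorem spherical_boundary_radial_equation_general (n k : ℕ)
    (f : EuclideanSpace ℝ (Fin n) → EuclideanSpace ℝ (Fin k))
    (hf : ContDiff ℝ 3 f) (hf0 : f 0 = 0) (hdf0 : fderiv ℝ f 0 = 0)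
    (κ : Fin k → Fin n → Fin n → ℝ)
    (hκ : ∀ j α β, κ j α β = iteratedFDeriv ℝ 2 (fun x => f x j) 0
      ![EuclideanSpace.single α 1, EuclideanSpace.single β 1])
    (xbar : EuclideanSpace ℝ (Fin n))
    (K2 : ℝ) (hK2 : K2 = ∑ i, (∑ α, ∑ β, κ i α β * xbar α * xbar β) ^ 2) :
    ∃ r : ℝ → ℝ,
      (∀ᶠ ε in nhdsWithin 0 (Set.Ioi 0),
        r ε ^ 2 + ∑ i, (f (r ε • xbar) i) ^ 2 = ε ^ 2) ∧
      (fun ε => r ε - (ε - K2 / 8 * ε ^ 3)) =O[nhdsWithin 0 (Set.Ioi 0)]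
        fun ε => ε ^ 4 := by
  set II := iteratedFDeriv ℝ 2 f 0 fun _ ↦ xbar
  have hII (j : Fin k) : II j = ∑ α, ∑ β, κ j α β * xbar α * xbar β := by
    rw [← EuclideanSpace.iteratedFDeriv_apply_coord hf.contDiffAt (by norm_num),
      ContinuousMultilinearMap.apply_const_eq_sum_sum_single]
    simp only [hκ, smul_eq_mul]
    exact Finset.sum_congr rfl fun α _ ↦ Finset.sum_congr rfl fun β _ ↦ by ring
  have hK2_norm : K2 = ‖II‖ ^ 2 := by simp only [hK2, EuclideanSpace.real_norm_sq_eq, hII]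
  have hline : (fun t : ℝ ↦ f (t • xbar) - (t ^ 2 / 2) • II) =O[𝓝 0] fun t ↦ t ^ 3 := by
    simpa [hf0, hdf0] using isBigO_comp_smul_sub_taylor_two hf xbar
  have hsq : (fun t ↦ ‖f (t • xbar)‖ ^ 2 - K2 / 4 * t ^ 4) =O[𝓝 0] fun t ↦ t ^ 5 :=
    hK2_norm ▸ isBigO_norm_sq_sub_of_isBigO_sub_sq_smul hline
  have hsolve (ε : ℝ) (hε : 0 < ε) :
      ∃ t ∈ Icc 0 ε, t ^ 2 + ‖f (t • xbar)‖ ^ 2 = ε ^ 2 :=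
    exists_mem_Icc_sq_add_eq_sq (by fun_prop) (by simp [hf0]) (fun _ ↦ sq_nonneg _) hε.le
  choose! r hr_mem hr_eq using hsolve
  have hr : ∀ᶠ ε in 𝓝[>] 0, r ε ∈ Icc 0 ε ∧ r ε ^ 2 + ‖f (r ε • xbar)‖ ^ 2 = ε ^ 2 :=
    eventually_mem_nhdsWithin.mono fun ε hε ↦ ⟨hr_mem ε hε, hr_eq ε hε⟩
  refine ⟨r, hr.mono fun ε hε ↦ ?_, isBigO_sub_radial_expansion hsq hr⟩
  rw [← EuclideanSpace.real_norm_sq_eq]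
  exact hε.2

/-- Radial parametrization of the boundary of the spherical component of a graph
manifold: for each unit tangent direction `x̄ ∈ S^{n-1} ⊂ T_pM`, there is a radial
function `r(ε)` with `r(ε)² + Σ_i f^i(r(ε)x̄)² = ε²` (the defining equation of
`M ∩ S^n_p(ε)`) and `r(ε) = ε − (K(x̄)²/8) ε³ + O(ε⁴)`, where
`K(x̄)² = Σ_i (Σ_{α,β} κ^i_{αβ} x̄^α x̄^β)²  (= ‖II(x̄,x̄)‖²)`. -/
theorem spherical_boundary_radial_equation (n k : ℕ)
    (f : EuclideanSpace ℝ (Fin n) → EuclideanSpace ℝ (Fin k))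
    (hf : ContDiff ℝ 3 f) (hf0 : f 0 = 0) (hdf0 : fderiv ℝ f 0 = 0)
    (κ : Fin k → Fin n → Fin n → ℝ)
    (hκ : ∀ j α β, κ j α β = iteratedFDeriv ℝ 2 (fun x => f x j) 0
      ![EuclideanSpace.single α 1, EuclideanSpace.single β 1])
    (xbar : EuclideanSpace ℝ (Fin n)) (hxbar : ‖xbar‖ = 1)
    (K2 : ℝ) (hK2 : K2 = ∑ i, (∑ α, ∑ β, κ i α β * xbar α * xbar β) ^ 2) :
    ∃ r : ℝ → ℝ,
      (∀ᶠ ε in nhdsWithin 0 (Set.Ioi 0),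
        r ε ^ 2 + ∑ i, (f (r ε • xbar) i) ^ 2 = ε ^ 2) ∧
      (fun ε => r ε - (ε - K2 / 8 * ε ^ 3)) =O[nhdsWithin 0 (Set.Ioi 0)]
        fun ε => ε ^ 4 :=
  spherical_boundary_radial_equation_general n k f hf hf0 hdf0 κ hκ xbar K2 hK2
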